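/- arXiv:1709.00169 — 7 statements merged into one kernel-verified Lean document; each statement's English description precedes it below -/
import Mathlib

section
/- Let R be a Noetherian integral domain. If there exists a prime element x in R such that the localization R_x (localizing at powers of x) is a unique factorization domain, then R is a unique factorization domain. -/
/-- A derivation is *locally nilpotent* if every element is killed by some iterate. -/
def IsLND {k B : Type*} [CommRing k] [CommRing B] [Algebra k B]
    (D : Derivation k B B) : Prop :=
  ∀ b : B, ∃ n : ℕ, (D.toLinearMap ^ n) b = 0

/-- A derivation *has a slice* if `1` is in its image. -/
def HasSlice {k B : Type*} [CommRing k] [CommRing B] [Algebra k B]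
    (D : Derivation k B B) : Prop :=
  ∃ s : B, D s = 1

/-- The kernel of a derivation, as a subalgebra. -/
def lndKer {k B : Type*} [CommRing k] [CommRing B] [Algebra k B]
    (D : Derivation k B B) : Subalgebra k B where
  carrier := {b | D b = 0}
  mul_mem' := by
    intro a b ha hb
    simp only [Set.mem_setOf_eq] at *
    simp [D.leibniz, ha, hb]
  add_mem' := by
    intro a b ha hb
    simp only [Set.mem_setOf_eq] at *
    simp [ha, hb]
  algebraMap_mem' := fun r => D.map_algebraMap r

/-- The Makar-Limanov invariant: intersection of the kernels of all locally
nilpotent derivations. -/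
def ML (k : Type*) {B : Type*} [CommRing k] [CommRing B] [Algebra k B] : Subalgebra k B :=
  ⨅ D ∈ {D : Derivation k B B | IsLND D}, lndKer D

/-- The Makar-Limanov–Freudenburg invariant: intersection of the kernels of all locally
nilpotent derivations admitting a slice (equal to `⊤ = B` if none exist). -/
def MLstar (k : Type*) {B : Type*} [CommRing k] [CommRing B] [Algebra k B] : Subalgebra k B :=
  ⨅ D ∈ {D : Derivation k B B | IsLND D ∧ HasSlice D}, lndKer D

/-- A `k`-algebra is *rigid* if it admits no nonzero locally nilpotent derivation. -/
def IsRigid (k B : Type*) [CommRing k] [CommRing B] [Algebra k B] : Prop :=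
  ∀ D : Derivation k B B, IsLND D → D = 0

/-- The extension `A ⊆ B` has transcendence degree `n`. -/
def TrdegEq (A B : Type*) [CommRing A] [CommRing B] [Algebra A B] (n : ℕ) : Prop :=
  (∃ x : Fin n → B, AlgebraicIndependent A x) ∧
    ∀ x : Fin (n + 1) → B, ¬ AlgebraicIndependent A x

/-- A subring `A` of a domain `B` is *inert* if `f * g ∈ A` for nonzero `f, g`
implies `f ∈ A` and `g ∈ A`. -/
def IsInert {B : Type*} [CommRing B] (A : Subring B) : Prop :=
  ∀ f g : B, f ≠ 0 → g ≠ 0 → f * g ∈ A → f ∈ A ∧ g ∈ A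

/-- Nagata's criterion: a Noetherian domain with a prime element `x` such that the
localization away from `x` is a UFD is itself a UFD. -/
theorem stmt_0 {R : Type*} [CommRing R] [IsDomain R] [IsNoetherianRing R]
    {x : R} (hx : Prime x)
    (h : haveI : IsDomain (Localization.Away x) :=
          IsLocalization.isDomain_of_le_nonZeroDivisors (Localization.Away x)
            (powers_le_nonZeroDivisors_of_noZeroDivisors hx.ne_zero)
        UniqueFactorizationMonoid (Localization.Away x)) :
    UniqueFactorizationMonoid R :=
  (UniqueFactorizationMonoid.iff_localizationAway_of_prime hx).mpr h
end

section
/- An inert subring of a unique factorization domain is itself a unique factorization domain. -/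
/-!
Inertness makes units, divisibility and irreducibility in `A` agree with those in `B`. So an
irreducible `p` of `A` stays irreducible, hence prime, in the UFD `B`, and `p ∣ a * b` descends
from `B` back to `A`. Strict divisibility chains in `A` stay strict in `B`, so they are finite.
-/

namespace IsInert

variable {B : Type*} [CommRing B] {A : Subring B}

theorem isUnit_of_isUnit_coe [Nontrivial B] (hA : IsInert A) {x : A} (hx : IsUnit (x : B)) :
    IsUnit x := by
  obtain ⟨u, hu⟩ := hx
  have hmul : (x : B) * ↑u⁻¹ = 1 := by rw [← hu, Units.mul_inv]
  have hx0 : (x : B) ≠ 0 := hu ▸ u.ne_zero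
  obtain ⟨-, hinv⟩ := hA _ _ hx0 (u⁻¹).ne_zero (hmul ▸ A.one_mem)
  exact IsUnit.of_mul_eq_one (a := x) ⟨_, hinv⟩ (Subtype.ext hmul)

theorem dvd_of_coe_dvd (hA : IsInert A) {x b : A} (hx : (x : B) ≠ 0) (h : (x : B) ∣ b) :
    x ∣ b := by
  obtain ⟨c, hc⟩ := h
  rcases eq_or_ne (b : B) 0 with hb | hb
  · exact (Subtype.ext hb : b = 0) ▸ dvd_zero x
  have hc0 : c ≠ 0 := by rintro rfl; exact hb (by simpa using hc)
  obtain ⟨-, hcA⟩ := hA _ _ hx hc0 (hc ▸ b.2)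
  exact ⟨⟨c, hcA⟩, Subtype.ext hc⟩

theorem dvdNotUnit_coe [Nontrivial B] (hA : IsInert A) {a b : A} (h : DvdNotUnit a b) :
    DvdNotUnit (a : B) b := by
  obtain ⟨ha, x, hx, rfl⟩ := h
  exact ⟨fun h0 => ha (Subtype.ext h0), x, fun hux => hx (hA.isUnit_of_isUnit_coe hux), rfl⟩

theorem irreducible_coe [Nontrivial B] (hA : IsInert A) {p : A} (hp : Irreducible p) :
    Irreducible (p : B) := by
  have hp0 : (p : B) ≠ 0 := fun h0 => hp.ne_zero (Subtype.ext h0)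
  refine ⟨fun hu => hp.not_isUnit (hA.isUnit_of_isUnit_coe hu), fun f g hfg => ?_⟩
  have hf : f ≠ 0 := by rintro rfl; exact hp0 (by simpa using hfg)
  have hg : g ≠ 0 := by rintro rfl; exact hp0 (by simpa using hfg)
  obtain ⟨hfA, hgA⟩ := hA _ _ hf hg (hfg ▸ p.2)
  exact (hp.isUnit_or_isUnit (Subtype.ext hfg : p = ⟨f, hfA⟩ * ⟨g, hgA⟩)).imp
    (IsUnit.map A.subtype) (IsUnit.map A.subtype)

theorem prime_of_prime_coe (hA : IsInert A) {p : A} (hp : Prime (p : B)) : Prime p := by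
  refine ⟨fun h0 => hp.ne_zero (by simp [h0]), fun hu => hp.not_isUnit (hu.map A.subtype),
    fun a b hab => ?_⟩
  have habB : (p : B) ∣ a * b := by simpa using map_dvd A.subtype hab
  exact (hp.dvd_or_dvd habB).imp (hA.dvd_of_coe_dvd hp.ne_zero) (hA.dvd_of_coe_dvd hp.ne_zero)

theorem wfDvdMonoid [Nontrivial B] [WfDvdMonoid B] (hA : IsInert A) : WfDvdMonoid A :=
  ⟨Subrelation.wf hA.dvdNotUnit_coe (InvImage.wf Subtype.val wellFounded_dvdNotUnit)⟩

end IsInert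

/-- An inert subring of a UFD is a UFD. -/
theorem stmt_1 {B : Type*} [CommRing B] [IsDomain B] [UniqueFactorizationMonoid B]
    (A : Subring B) (hA : IsInert A) :
    UniqueFactorizationMonoid A :=
  have := hA.wfDvdMonoid
  { irreducible_iff_prime := fun {_} =>
      ⟨fun hp => hA.prime_of_prime_coe (hA.irreducible_coe hp).prime, Prime.irreducible⟩ }
end

section
/- If A is an inert subring of an integral domain B, then A is algebraically closed in B, i.e., every element of B that is algebraic over the fraction field of A (equivalently, satisfies a nonzero polynomial with coefficients in A) belongs to A. -/
/-- An inert subring of a domain is algebraically closed in it: every element of `B`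
algebraic over `A` lies in `A`. -/
theorem stmt_2 {B : Type*} [CommRing B] [IsDomain B] (A : Subring B) (hA : IsInert A) :
    ∀ b : B, IsAlgebraic A b → b ∈ A := by
  intro b hb
  by_cases hb0 : b = 0
  · simpa [hb0] using A.zero_mem
  obtain ⟨p, hp, hpb⟩ := hb
  -- strong induction on natDegree of p
  suffices h : ∀ n : ℕ, ∀ p : Polynomial A, p.natDegree ≤ n → p ≠ 0 →
      Polynomial.aeval b p = 0 → b ∈ A from h p.natDegree p le_rfl hp hpb
  intro n
  induction n with
  | zero =>
    intro p hdeg hp hpb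
    obtain ⟨c, rfl⟩ := Polynomial.natDegree_eq_zero.mp (Nat.le_zero.mp hdeg)
    simp only [Polynomial.aeval_C] at hpb
    refine absurd ?_ hp
    rw [Polynomial.C_eq_zero]
    exact Subtype.ext (show ((c : ↥A) : B) = 0 from hpb)
  | succ n ih =>
    intro p hdeg hp hpb
    have hdecomp : Polynomial.aeval b p.divX * b + algebraMap A B (p.coeff 0) = 0 := by
      have := p.divX_mul_X_add
      calc Polynomial.aeval b p.divX * b + algebraMap A B (p.coeff 0)
          = Polynomial.aeval b (p.divX * Polynomial.X + Polynomial.C (p.coeff 0)) := by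
            simp
        _ = 0 := by rw [p.divX_mul_X_add]; exact hpb
    by_cases hc : p.coeff 0 = 0
    · -- then divX kills b too
      rw [hc] at hdecomp
      simp only [map_zero, add_zero] at hdecomp
      have hdx : Polynomial.aeval b p.divX = 0 := by
        rcases mul_eq_zero.mp hdecomp with h | h
        · exact h
        · exact absurd h hb0
      have hdx0 : p.divX ≠ 0 := by
        intro h
        apply hp
        have := p.divX_mul_X_add
        rw [h, hc] at this
        simpa using this.symm
      exact ih p.divX (by
        have := p.natDegree_divX_eq_natDegree_tsub_one
        omega) hdx0 hdx
    · -- coeff 0 nonzero; use inertness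
      have key : Polynomial.aeval b p.divX * b = -(algebraMap A B (p.coeff 0)) := by
        linear_combination hdecomp
      have hmem : Polynomial.aeval b p.divX * b ∈ A := by
        rw [key]
        exact A.neg_mem (p.coeff 0).2
      have hne : Polynomial.aeval b p.divX * b ≠ 0 := by
        rw [key]
        simp only [ne_eq, neg_eq_zero]
        intro h
        exact hc (Subtype.ext (show ((p.coeff 0 : ↥A) : B) = 0 from h))
      have hq : Polynomial.aeval b p.divX ≠ 0 := left_ne_zero_of_mul hne
      exact (hA _ b hq hb0 hmem).2
end

section
/- If A is an inert subring of an integral domain B and S is a multiplicatively closed subset of A not containing 0, then S⁻¹A is an inert subring of S⁻¹B. -/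
/-!
Write `f = b₁ / t₁` and `g = b₂ / t₂` in `S⁻¹B`. If `f g = a / s` with `a ∈ A`, `s ∈ S`, then,
`B` being a domain and `0 ∉ S`, `(s b₁) b₂ = t₁ t₂ a ∈ A`, so inertness of `A` gives `s b₁ ∈ A` and
`b₂ ∈ A`; hence `f = (s b₁) / (s t₁)` and `g = b₂ / t₂` lie in `S⁻¹A`.
-/

section InertLocalization

variable {B : Type*} [CommRing B] (A : Subring B) (S : Submonoid A)

/-- `S⁻¹A` is modelled inside `S⁻¹B` as the range of this map. -/
noncomputable abbrev localizationMap : Localization S →+* Localization (S.map A.subtype) :=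
  IsLocalization.map (Localization (S.map A.subtype)) (A.subtype : A →+* B)
    (Submonoid.le_comap_map S)

theorem mk'_mem_range_localizationMap {b : B} (t : S.map A.subtype) (s : S)
    (hsb : (s : B) * b ∈ A) :
    IsLocalization.mk' (Localization (S.map A.subtype)) b t ∈ (localizationMap A S).range := by
  obtain ⟨_, u, hu, rfl⟩ := t
  refine ⟨IsLocalization.mk' (Localization S) (⟨(s : B) * b, hsb⟩ : A) (s * ⟨u, hu⟩), ?_⟩
  rw [IsLocalization.map_mk']
  refine IsLocalization.mk'_eq_of_eq ?_
  simp only [Submonoid.coe_mul, Subring.subtype_apply, Subring.coe_mul]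
  ring

theorem coe_ne_zero_of_mem_map_subtype (hS : (0 : A) ∉ S) (t : S.map A.subtype) :
    (t : B) ≠ 0 := by
  obtain ⟨_, u, hu, rfl⟩ := t
  rintro (h : (u : B) = 0)
  exact hS (ZeroMemClass.coe_eq_zero.1 h ▸ hu)

theorem exists_mul_mem_of_mk'_mem_range_localizationMap [IsDomain B] (hS : (0 : A) ∉ S)
    {b : B} {t : S.map A.subtype}
    (h : IsLocalization.mk' (Localization (S.map A.subtype)) b t ∈ (localizationMap A S).range) :
    ∃ s : S, (s : B) * b ∈ A := by
  obtain ⟨y, hy⟩ := h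
  obtain ⟨_, u, hu, rfl⟩ := t
  obtain ⟨⟨a, s⟩, rfl⟩ := IsLocalization.mk'_surjective S y
  rw [IsLocalization.map_mk', IsLocalization.eq] at hy
  obtain ⟨c, hc⟩ := hy
  have hsb : (s : B) * b = u * a :=
    (mul_left_cancel₀ (coe_ne_zero_of_mem_map_subtype A S hS c) hc).symm
  exact ⟨s, hsb ▸ A.mul_mem u.2 a.2⟩

end InertLocalization

/-- If `A` is inert in the domain `B` and `S` is a multiplicative set of `A` not containing `0`,
then `S⁻¹A` is inert in `S⁻¹B`. -/
theorem stmt_4 {B : Type*} [CommRing B] [IsDomain B] (A : Subring B) (hA : IsInert A)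
    (S : Submonoid A) (hS : (0 : A) ∉ S) :
    IsInert (RingHom.range
      (IsLocalization.map (Localization (S.map A.subtype)) (A.subtype : A →+* B)
        (Submonoid.le_comap_map S) : Localization S →+* Localization (S.map A.subtype))) := by
  intro f g hf hg hfg
  obtain ⟨⟨b₁, t₁⟩, rfl⟩ := IsLocalization.mk'_surjective (S.map A.subtype) f
  obtain ⟨⟨b₂, t₂⟩, rfl⟩ := IsLocalization.mk'_surjective (S.map A.subtype) g
  rw [← IsLocalization.mk'_mul] at hfg
  obtain ⟨s, hs⟩ := exists_mul_mem_of_mk'_mem_range_localizationMap A S hS hfg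
  have hsb₁ : (s : B) * b₁ ≠ 0 := mul_ne_zero
    (coe_ne_zero_of_mem_map_subtype A S hS ⟨s, Submonoid.mem_map_of_mem _ s.2⟩)
    (IsLocalization.ne_zero_of_mk'_ne_zero hf)
  obtain ⟨h₁, h₂⟩ := hA _ _ hsb₁ (IsLocalization.ne_zero_of_mk'_ne_zero hg)
    (by rwa [← mul_assoc] at hs)
  exact ⟨mk'_mem_range_localizationMap A S t₁ s h₁,
    mk'_mem_range_localizationMap A S t₂ 1 (by simpa using h₂)⟩
end

section
/- Let k be a field of characteristic zero, B a k-algebra that is an integral domain, and D a locally nilpotent k-derivation of B. Then the kernel of D is an inert subring of B: if f, g ∈ B are nonzero and D(fg) = 0 with products in ker D, then Df = 0 and Dg = 0. -/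
/-!
Let `ν b` be the largest `m` with `Dᵐ b ≠ 0`. By the Leibniz rule, the only surviving term of
`D^(ν f + ν g) (f g)` is `C(ν f + ν g, ν f) • (D^(ν f) f * D^(ν g) g)`, which is nonzero in a domain
of characteristic zero. If `D (f g) = 0`, every iterate of positive order kills `f g`, so
`ν f + ν g = 0`.
-/

open Finset

namespace Derivation

variable {R A : Type*} [CommSemiring R] [CommSemiring A] [Algebra R A] (D : Derivation R A A)

theorem iterate_map_mul (n : ℕ) (a b : A) :
    D^[n] (a * b) = ∑ ij ∈ antidiagonal n, n.choose ij.1 • (D^[ij.1] a * D^[ij.2] b) := by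
  induction n with
  | zero => simp
  | succ n ih =>
    rw [sum_antidiagonal_choose_succ_nsmul (fun i j => D^[i] a * D^[j] b) n]
    simp only [Function.iterate_succ_apply', ih, map_sum, map_nsmul, leibniz, smul_eq_mul,
      nsmul_add, sum_add_distrib]
    refine congrArg _ (sum_congr rfl fun ⟨i, j⟩ hij => ?_)
    rw [Nat.choose_symm_of_eq_add (HasAntidiagonal.mem_antidiagonal.1 hij).symm, mul_comm]

theorem iterate_map_mul_of_iterate_succ_eq_zero {a b : A} {m n : ℕ} (ha : D^[m + 1] a = 0)
    (hb : D^[n + 1] b = 0) : D^[m + n] (a * b) = (m + n).choose m • (D^[m] a * D^[n] b) := by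
  have vanish : ∀ {c : A} {k j : ℕ}, D^[k + 1] c = 0 → k < j → D^[j] c = 0 := fun hc hkj => by
    rw [← Nat.sub_add_cancel hkj, Function.iterate_add_apply, hc, iterate_map_zero]
  rw [iterate_map_mul, sum_eq_single (m, n)]
  · rintro ⟨i, j⟩ hij hne
    rw [HasAntidiagonal.mem_antidiagonal] at hij
    rcases lt_or_gt_of_ne (show i ≠ m by rintro rfl; exact hne (Prod.ext rfl (by omega))) with hi | hi
    · rw [vanish hb (by omega : n < j), mul_zero, smul_zero]
    · rw [vanish ha hi, zero_mul, smul_zero]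
  · simp

theorem iterate_map_mul_ne_zero [IsDomain A] [CharZero A] {a b : A} {m n : ℕ}
    (ha : D^[m] a ≠ 0) (ha' : D^[m + 1] a = 0) (hb : D^[n] b ≠ 0) (hb' : D^[n + 1] b = 0) :
    D^[m + n] (a * b) ≠ 0 := by
  rw [D.iterate_map_mul_of_iterate_succ_eq_zero ha' hb', nsmul_eq_mul]
  exact mul_ne_zero (Nat.cast_ne_zero.2 (Nat.choose_pos (Nat.le_add_right m n)).ne')
    (mul_ne_zero ha hb)

end Derivation

theorem IsLND.exists_iterate_ne_zero_iterate_succ_eq_zero {k B : Type*} [CommRing k] [CommRing B]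
    [Algebra k B] {D : Derivation k B B} (hD : IsLND D) {b : B} (hb : b ≠ 0) :
    ∃ m, D^[m] b ≠ 0 ∧ D^[m + 1] b = 0 := by
  classical
  have hex : ∃ n, D^[n] b = 0 := (hD b).imp fun n hn => by rwa [Module.End.pow_apply] at hn
  obtain ⟨m, hm⟩ := Nat.exists_eq_add_one_of_ne_zero fun h0 : Nat.find hex = 0 =>
    hb (by simpa [h0] using Nat.find_spec hex)
  exact ⟨m, Nat.find_min hex (by omega), hm ▸ Nat.find_spec hex⟩

/-- The kernel of a locally nilpotent derivation of a domain is inert. -/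
theorem stmt_5 {k B : Type*} [Field k] [CharZero k] [CommRing B] [IsDomain B] [Algebra k B]
    (D : Derivation k B B) (hD : IsLND D) :
    ∀ f g : B, f ≠ 0 → g ≠ 0 → D (f * g) = 0 → D f = 0 ∧ D g = 0 := by
  intro f g hf hg hfg
  have : CharZero B := charZero_of_injective_algebraMap (algebraMap k B).injective
  obtain ⟨m, hm, hm'⟩ := hD.exists_iterate_ne_zero_iterate_succ_eq_zero hf
  obtain ⟨n, hn, hn'⟩ := hD.exists_iterate_ne_zero_iterate_succ_eq_zero hg
  have hmn : D^[m + n] (f * g) ≠ 0 := D.iterate_map_mul_ne_zero hm hm' hn hn'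
  obtain ⟨rfl, rfl⟩ : m = 0 ∧ n = 0 := by
    by_contra h
    obtain ⟨j, hj⟩ := Nat.exists_eq_add_one_of_ne_zero (show m + n ≠ 0 by omega)
    rw [hj, Function.iterate_succ_apply, hfg, iterate_map_zero] at hmn
    exact hmn rfl
  exact ⟨hm', hn'⟩
end

section
/- Let k be a field of characteristic zero, B a k-domain, D a locally nilpotent k-derivation with slice s, and A = Ker D. Define the Dixmier map π_s : B → B by π_s(f) = Σ_{i≥0} ((-1)^i / i!) D^i(f) s^i. Then π_s is a k-algebra homomorphism with image A and kernel equal to the ideal sB. -/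
/-! For a locally nilpotent `D`, `exp (tD) f = ∑ tⁱ Dⁱf / i!` is a polynomial in `t`, and the general
Leibniz rule makes `f ↦ exp (tD) f` multiplicative; `π_s` is its evaluation at `t = -s`, hence a
`k`-algebra map, and it fixes `Ker D`. For `P = exp (tD) f` the coefficientwise derivative `DP`
equals `dP/dt`, so the chain rule `D (P x) = (DP) x + P' x * D x` at `x = -s`, `D x = -1`, gives
`D (π_s f) = 0`. Finally `π_s f = P (-s) ≡ P 0 = f` modulo `s`, and `π_s s = 0`. -/

open Finset Polynomial
open scoped Nat

theorem inv_factorial_add_mul_choose {k : Type*} [Field k] [CharZero k] (i j : ℕ) :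
    (((i + j)! : ℕ) : k)⁻¹ * ((i + j).choose i : k) = ((i ! : ℕ) : k)⁻¹ * ((j ! : ℕ) : k)⁻¹ := by
  rw [Nat.cast_add_choose, mul_div, inv_mul_cancel₀ (Nat.cast_ne_zero.2 (Nat.factorial_ne_zero _)),
    one_div, mul_inv]

theorem inv_factorial_succ_mul {k : Type*} [Field k] [CharZero k] (n : ℕ) :
    (((n + 1)! : ℕ) : k)⁻¹ * ((n + 1 : ℕ) : k) = ((n ! : ℕ) : k)⁻¹ := by
  rw [Nat.factorial_succ, Nat.cast_mul, mul_inv, mul_comm, ← mul_assoc,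
    mul_inv_cancel₀ (Nat.cast_ne_zero.2 n.succ_ne_zero), one_mul]

namespace Derivation

section Leibniz

variable {R A : Type*} [CommSemiring R] [CommSemiring A] [Algebra R A] (D : Derivation R A A)

theorem pow_succ_apply (n : ℕ) (f : A) :
    (D.toLinearMap ^ (n + 1)) f = D ((D.toLinearMap ^ n) f) := by
  rw [pow_succ', Module.End.mul_apply, coeFn_coe]

theorem pow_apply_mul (n : ℕ) (f g : A) :
    (D.toLinearMap ^ n) (f * g) = ∑ ij ∈ antidiagonal n,
      n.choose ij.1 • ((D.toLinearMap ^ ij.1) f * (D.toLinearMap ^ ij.2) g) := by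
  induction n with
  | zero => simp
  | succ n ih =>
    rw [sum_antidiagonal_choose_succ_nsmul
      (fun i j => (D.toLinearMap ^ i) f * (D.toLinearMap ^ j) g) n]
    simp only [pow_succ_apply, ih, map_sum, map_nsmul, leibniz, smul_eq_mul, smul_add,
      sum_add_distrib]
    congr 1
    refine sum_congr rfl fun ⟨i, j⟩ hij => ?_
    rw [n.choose_symm_of_eq_add (mem_antidiagonal.1 hij).symm, mul_comm]

theorem pow_add_apply_mul_eq_zero {f g : A} {N M : ℕ} (hf : (D.toLinearMap ^ N) f = 0)
    (hg : (D.toLinearMap ^ M) g = 0) : (D.toLinearMap ^ (N + M)) (f * g) = 0 := by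
  rw [pow_apply_mul]
  refine sum_eq_zero fun ⟨i, j⟩ hij => ?_
  rcases le_or_gt N i with hi | hi
  · rw [Module.End.pow_map_zero_of_le hi hf, zero_mul, smul_zero]
  · have hij : i + j = N + M := mem_antidiagonal.1 hij
    have hj : M ≤ j := by omega
    rw [Module.End.pow_map_zero_of_le hj hg, mul_zero, smul_zero]

end Leibniz

section TruncExp

variable {k B : Type*} [Field k] [CommSemiring B] [Algebra k B] (D : Derivation k B B)

noncomputable def truncExp (N : ℕ) (f : B) : B[X] :=
  ∑ i ∈ range N, monomial i ((i ! : k)⁻¹ • (D.toLinearMap ^ i) f)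

theorem coeff_truncExp {N : ℕ} {f : B} (hf : (D.toLinearMap ^ N) f = 0) (n : ℕ) :
    (D.truncExp N f).coeff n = (n ! : k)⁻¹ • (D.toLinearMap ^ n) f := by
  simp only [truncExp, finset_sum_coeff, coeff_monomial, sum_ite_eq', mem_range]
  split_ifs with h
  · rfl
  · rw [Module.End.pow_map_zero_of_le (not_lt.1 h) hf, smul_zero]

theorem truncExp_congr {N M : ℕ} {f : B} (hN : (D.toLinearMap ^ N) f = 0)
    (hM : (D.toLinearMap ^ M) f = 0) : D.truncExp N f = D.truncExp M f := by
  ext n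
  rw [coeff_truncExp D hN, coeff_truncExp D hM]

theorem truncExp_add (N : ℕ) (f g : B) :
    D.truncExp N (f + g) = D.truncExp N f + D.truncExp N g := by
  simp only [truncExp, map_add, smul_add, sum_add_distrib]

theorem eval_truncExp (N : ℕ) (f x : B) :
    (D.truncExp N f).eval x = ∑ i ∈ range N, (i ! : k)⁻¹ • (D.toLinearMap ^ i) f * x ^ i := by
  simp only [truncExp, eval_finset_sum, eval_monomial]

theorem truncExp_mul [CharZero k] {N M : ℕ} {f g : B} (hf : (D.toLinearMap ^ N) f = 0)
    (hg : (D.toLinearMap ^ M) g = 0) :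
    D.truncExp (N + M) (f * g) = D.truncExp N f * D.truncExp M g := by
  ext n
  rw [coeff_truncExp D (D.pow_add_apply_mul_eq_zero hf hg), coeff_mul, pow_apply_mul, smul_sum]
  refine sum_congr rfl fun ⟨i, j⟩ hij => ?_
  obtain rfl : i + j = n := mem_antidiagonal.1 hij
  rw [coeff_truncExp D hf, coeff_truncExp D hg, ← Nat.cast_smul_eq_nsmul k, smul_smul,
    smul_mul_smul_comm, inv_factorial_add_mul_choose]

end TruncExp

section Dixmier

variable {k B : Type*} [Field k] [CommRing B] [Algebra k B] (D : Derivation k B B)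

-- The chain rule for `P = truncExp (N + 1) f`, whose coefficientwise image under `D` is
-- `truncExp (N + 1) (D f)` and whose `t`-derivative is `truncExp N (D f)`.
theorem apply_eval_truncExp_succ [CharZero k] (N : ℕ) (f x : B) :
    D ((D.truncExp (N + 1) f).eval x) =
      (D.truncExp (N + 1) (D f)).eval x + D x * (D.truncExp N (D f)).eval x := by
  have hpow (i : ℕ) : (D.toLinearMap ^ i) (D f) = (D.toLinearMap ^ (i + 1)) f := by
    rw [pow_succ, Module.End.mul_apply, coeFn_coe]
  simp only [eval_truncExp, map_sum, leibniz, map_smul, leibniz_pow, hpow, sum_add_distrib,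
    ← pow_succ_apply]
  rw [add_comm]
  congr 1
  · exact sum_congr rfl fun i _ => by rw [smul_eq_mul, mul_comm]
  · rw [sum_range_succ', mul_sum, zero_smul, smul_zero, add_zero]
    refine sum_congr rfl fun i _ => ?_
    have hc := congrArg (algebraMap k B) (inv_factorial_succ_mul (k := k) i)
    rw [map_mul, _root_.map_natCast (algebraMap k B)] at hc
    simp only [Nat.add_sub_cancel, smul_eq_mul, Algebra.smul_def]
    linear_combination ((D.toLinearMap ^ (i + 1)) f * x ^ i * D x) * hc

noncomputable def dixmierMap (s f : B) : B :=
  ∑ᶠ i : ℕ, ((-1 : k) ^ i * (i ! : k)⁻¹) • ((D.toLinearMap ^ i) f * s ^ i)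

theorem dixmierMap_eq_eval_truncExp {N : ℕ} {f : B} (hf : (D.toLinearMap ^ N) f = 0) (s : B) :
    D.dixmierMap s f = (D.truncExp N f).eval (-s) := by
  rw [eval_truncExp, dixmierMap, finsum_eq_sum_of_support_subset (s := range N)]
  · refine sum_congr rfl fun i _ => ?_
    rw [mul_comm, mul_smul, smul_mul_assoc]
    congr 1
    rw [neg_pow s, Algebra.smul_def, map_pow, map_neg, map_one]
    ring
  · intro i hi
    rw [coe_range, Set.mem_Iio]
    by_contra h
    exact hi (by simp [Module.End.pow_map_zero_of_le (not_lt.1 h) hf])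

theorem dixmierMap_of_apply_eq_zero (s : B) {a : B} (ha : D a = 0) : D.dixmierMap s a = a := by
  rw [D.dixmierMap_eq_eval_truncExp (N := 1) (by simpa using ha) s, eval_truncExp]
  simp

theorem dixmierMap_add (hD : IsLND D) (s f g : B) :
    D.dixmierMap s (f + g) = D.dixmierMap s f + D.dixmierMap s g := by
  obtain ⟨N, hf⟩ := hD f
  obtain ⟨M, hg⟩ := hD g
  replace hf := Module.End.pow_map_zero_of_le (N.le_add_right M) hf
  replace hg := Module.End.pow_map_zero_of_le (M.le_add_left N) hg
  have hfg : (D.toLinearMap ^ (N + M)) (f + g) = 0 := by rw [map_add, hf, hg, add_zero]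
  rw [D.dixmierMap_eq_eval_truncExp hf, D.dixmierMap_eq_eval_truncExp hg,
    D.dixmierMap_eq_eval_truncExp hfg, truncExp_add, eval_add]

theorem dixmierMap_mul [CharZero k] (hD : IsLND D) (s f g : B) :
    D.dixmierMap s (f * g) = D.dixmierMap s f * D.dixmierMap s g := by
  obtain ⟨N, hf⟩ := hD f
  obtain ⟨M, hg⟩ := hD g
  rw [D.dixmierMap_eq_eval_truncExp hf, D.dixmierMap_eq_eval_truncExp hg,
    D.dixmierMap_eq_eval_truncExp (D.pow_add_apply_mul_eq_zero hf hg), truncExp_mul D hf hg,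
    eval_mul]

noncomputable def dixmierAlgHom [CharZero k] (hD : IsLND D) (s : B) : B →ₐ[k] B where
  toFun := D.dixmierMap s
  map_one' := D.dixmierMap_of_apply_eq_zero s D.map_one_eq_zero
  map_mul' := D.dixmierMap_mul hD s
  map_zero' := D.dixmierMap_of_apply_eq_zero s (map_zero D)
  map_add' := D.dixmierMap_add hD s
  commutes' r := D.dixmierMap_of_apply_eq_zero s (D.map_algebraMap r)

theorem dixmierMap_self {s : B} (hs : D s = 1) : D.dixmierMap s s = 0 := by
  have h2 : (D.toLinearMap ^ 2) s = 0 := by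
    rw [pow_succ_apply, pow_one, coeFn_coe, hs, map_one_eq_zero]
  rw [D.dixmierMap_eq_eval_truncExp h2, eval_truncExp]
  simp [sum_range_succ, hs]

theorem sub_dixmierMap_mem_span_singleton (hD : IsLND D) (s f : B) :
    f - D.dixmierMap s f ∈ Ideal.span {s} := by
  obtain ⟨N, hN⟩ := hD f
  have h := sub_dvd_eval_sub 0 (-s) (D.truncExp N f)
  rw [← coeff_zero_eq_eval_zero, coeff_truncExp D hN, zero_sub, neg_neg] at h
  rw [D.dixmierMap_eq_eval_truncExp hN, Ideal.mem_span_singleton]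
  simpa using h

theorem apply_dixmierMap_eq_zero [CharZero k] (hD : IsLND D) {s : B} (hs : D s = 1) (f : B) :
    D (D.dixmierMap s f) = 0 := by
  obtain ⟨N, hN⟩ := hD (D f)
  have hf : (D.toLinearMap ^ (N + 1)) f = 0 := by
    rwa [pow_succ, Module.End.mul_apply, coeFn_coe]
  rw [D.dixmierMap_eq_eval_truncExp hf, apply_eval_truncExp_succ,
    D.truncExp_congr (Module.End.pow_map_zero_of_le N.le_succ hN) hN, map_neg, hs]
  ring

theorem range_dixmierAlgHom [CharZero k] (hD : IsLND D) {s : B} (hs : D s = 1) :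
    Set.range (D.dixmierAlgHom hD s) = (lndKer D : Set B) := by
  ext b
  refine ⟨?_, fun hb => ⟨b, D.dixmierMap_of_apply_eq_zero s hb⟩⟩
  rintro ⟨f, rfl⟩
  exact D.apply_dixmierMap_eq_zero hD hs f

theorem dixmierAlgHom_eq_zero_iff [CharZero k] (hD : IsLND D) {s : B} (hs : D s = 1) (f : B) :
    D.dixmierAlgHom hD s f = 0 ↔ f ∈ Ideal.span {s} := by
  refine ⟨fun hf => ?_, fun hf => ?_⟩
  · have h := D.sub_dixmierMap_mem_span_singleton hD s f
    rwa [show D.dixmierMap s f = 0 from hf, sub_zero] at h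
  · obtain ⟨c, rfl⟩ := Ideal.mem_span_singleton'.1 hf
    rw [map_mul]
    exact mul_eq_zero_of_right _ (D.dixmierMap_self hs)

end Dixmier

end Derivation

theorem stmt_8_general {k B : Type*} [Field k] [CharZero k] [CommRing B] [Algebra k B]
    (D : Derivation k B B) (hD : IsLND D) (s : B) (hs : D s = 1) :
    ∃ π : B →ₐ[k] B,
      (∀ f : B, π f = ∑ᶠ i : ℕ,
        ((-1 : k) ^ i * ((Nat.factorial i : k)⁻¹)) • ((D.toLinearMap ^ i) f * s ^ i)) ∧
      Set.range π = (lndKer D : Set B) ∧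
      (∀ f : B, π f = 0 ↔ f ∈ Ideal.span {s}) :=
  ⟨D.dixmierAlgHom hD s, fun _ => rfl, D.range_dixmierAlgHom hD hs,
    D.dixmierAlgHom_eq_zero_iff hD hs⟩

/-- Slice theorem, part (b): the Dixmier map `π_s` is a `k`-algebra homomorphism with
image `Ker D` and kernel the ideal `sB`. -/
theorem stmt_8 {k B : Type*} [Field k] [CharZero k] [CommRing B] [IsDomain B] [Algebra k B]
    (D : Derivation k B B) (hD : IsLND D) (s : B) (hs : D s = 1) :
    ∃ π : B →ₐ[k] B,
      (∀ f : B, π f = ∑ᶠ i : ℕ,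
        ((-1 : k) ^ i * ((Nat.factorial i : k)⁻¹)) • ((D.toLinearMap ^ i) f * s ^ i)) ∧
      Set.range π = (lndKer D : Set B) ∧
      (∀ f : B, π f = 0 ↔ f ∈ Ideal.span {s}) :=
  stmt_8_general D hD s hs
end

section
/- Let k be a field of characteristic zero, C an affine k-domain, and C[T] a polynomial ring in one variable over C. Then ML*(C[T]) ⊆ ML(C), where ML* is the intersection of kernels of locally nilpotent derivations admitting a slice, and ML is the intersection of kernels of all locally nilpotent derivations. -/
open Polynomial

section LocallyNilpotent

variable {k B : Type*} [CommRing k] [CommRing B] [Algebra k B]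

lemma isLND_iff_maxGenEigenspace_eq_top (D : Derivation k B B) :
    IsLND D ↔ Module.End.maxGenEigenspace (D : Module.End k B) 0 = ⊤ := by
  simp [IsLND, Submodule.eq_top_iff', Module.End.mem_maxGenEigenspace]

lemma isLND_zero : IsLND (0 : Derivation k B B) := fun _ => ⟨1, by simp⟩

lemma IsLND.add {D₁ D₂ : Derivation k B B} (h : Commute D₁.toLinearMap D₂.toLinearMap)
    (h₁ : IsLND D₁) (h₂ : IsLND D₂) : IsLND (D₁ + D₂) := by
  rw [isLND_iff_maxGenEigenspace_eq_top] at h₁ h₂ ⊢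
  rw [Derivation.coe_add_linearMap, eq_top_iff]
  simpa [h₁, h₂] using Module.End.genEigenspace_inf_le_add _ _ 0 0 ⊤ ⊤ h

lemma mem_ML_iff {b : B} : b ∈ ML k ↔ ∀ D : Derivation k B B, IsLND D → D b = 0 := by
  simp [ML, Algebra.mem_iInf, lndKer]

lemma mem_MLstar_iff {b : B} :
    b ∈ MLstar k ↔ ∀ D : Derivation k B B, IsLND D → HasSlice D → D b = 0 := by
  simp [MLstar, Algebra.mem_iInf, lndKer]

end LocallyNilpotent

namespace Derivation

variable {k A : Type*} [CommRing k] [CommRing A] [Algebra k A] (D : Derivation k A A)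

noncomputable def polyMapCoeffs : Derivation k A[X] A[X] :=
  PolynomialModule.equivPolynomialSelf.compDer D.mapCoeffs

@[simp]
lemma coeff_polyMapCoeffs (p : A[X]) (n : ℕ) : (D.polyMapCoeffs p).coeff n = D (p.coeff n) :=
  rfl

lemma coeff_pow_polyMapCoeffs_apply (m : ℕ) (p : A[X]) (n : ℕ) :
    (((D.polyMapCoeffs : Module.End k A[X]) ^ m) p).coeff n =
      ((D : Module.End k A) ^ m) (p.coeff n) := by
  induction m generalizing p with
  | zero => simp
  | succ m ih => simp [pow_succ, Module.End.mul_apply, ih]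

lemma commute_polyMapCoeffs_derivative :
    Commute (D.polyMapCoeffs : Module.End k A[X])
      (derivative'.restrictScalars k : Derivation k A[X] A[X]) := by
  ext p n
  simp [Module.End.mul_apply, coeff_derivative, mul_comm]

noncomputable def extendPolynomial : Derivation k A[X] A[X] :=
  D.polyMapCoeffs + derivative'.restrictScalars k

@[simp]
lemma extendPolynomial_X : D.extendPolynomial X = 1 := by
  ext n
  rcases eq_or_ne n 1 with rfl | hn
  · simp [extendPolynomial]
  · simp [extendPolynomial, coeff_X_of_ne_one hn, coeff_one]

@[simp]
lemma extendPolynomial_C (a : A) : D.extendPolynomial (C a) = C (D a) := by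
  ext n
  rcases eq_or_ne n 0 with rfl | hn <;> simp [extendPolynomial, coeff_C, *]

lemma zero_extendPolynomial_apply (p : A[X]) :
    (0 : Derivation k A A).extendPolynomial p = derivative p := by
  ext n
  simp [extendPolynomial]

end Derivation

section Extension

variable {k A : Type*} [CommRing k] [CommRing A] [Algebra k A]

lemma IsLND.polyMapCoeffs {D : Derivation k A A} (hD : IsLND D) : IsLND D.polyMapCoeffs := by
  rw [isLND_iff_maxGenEigenspace_eq_top]
  -- `maxGenEigenspace 0` is a submodule, so it suffices to treat monomials.
  refine Submodule.eq_top_iff'.2 fun p => ?_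
  induction p using Polynomial.induction_on' with
  | add p q hp hq => exact add_mem hp hq
  | monomial n a =>
    obtain ⟨m, hm⟩ := hD a
    refine (Module.End.mem_maxGenEigenspace _ _ _).2 ⟨m, Polynomial.ext fun i => ?_⟩
    simp [Derivation.coeff_pow_polyMapCoeffs_apply, coeff_monomial, apply_ite, hm]

lemma isLND_restrictScalars_derivative' :
    IsLND (derivative'.restrictScalars k : Derivation k A[X] A[X]) := fun p =>
  ⟨p.natDegree + 1, by
    rw [Module.End.pow_apply]
    exact iterate_derivative_eq_zero p.natDegree.lt_succ_self⟩

lemma IsLND.extendPolynomial {D : Derivation k A A} (hD : IsLND D) :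
    IsLND D.extendPolynomial :=
  hD.polyMapCoeffs.add D.commute_polyMapCoeffs_derivative isLND_restrictScalars_derivative'

end Extension

theorem stmt_9_general {k C : Type*} [Field k] [CharZero k] [CommRing C] [Algebra k C] :
    ∀ p : Polynomial C, p ∈ MLstar k (B := Polynomial C) →
      ∃ c : C, c ∈ ML k (B := C) ∧ p = Polynomial.C c := by
  intro p hp
  have hker (D : Derivation k C C) (hD : IsLND D) : D.extendPolynomial p = 0 :=
    mem_MLstar_iff.1 hp _ hD.extendPolynomial ⟨X, D.extendPolynomial_X⟩
  have : IsAddTorsionFree C := .of_isTorsionFree k C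
  obtain ⟨c, rfl⟩ : ∃ c, p = Polynomial.C c := ⟨p.coeff 0, eq_C_of_natDegree_eq_zero <| by
    simpa [Derivation.zero_extendPolynomial_apply] using hker 0 isLND_zero⟩
  exact ⟨c, mem_ML_iff.2 fun D hD => by simpa using hker D hD, rfl⟩

/-- `ML*(C[T]) ⊆ ML(C)` for an affine domain `C` over a field of characteristic zero. -/
theorem stmt_9 {k C : Type*} [Field k] [CharZero k] [CommRing C] [IsDomain C] [Algebra k C]
    [Algebra.FiniteType k C] :
    ∀ p : Polynomial C, p ∈ MLstar k (B := Polynomial C) →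
      ∃ c : C, c ∈ ML k (B := C) ∧ p = Polynomial.C c :=
  stmt_9_general
end
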